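/- For every λ⊕-term M, 𝒯(eBT(M)) = {s ∈ 𝒯(M) | s is a normal resource term}: the Taylor support of the elementary Böhm tree of M consists exactly of the →∂-normal elements of the Taylor support of M. -/

import Mathlib

set_option maxHeartbeats 1000000

/-! ### Rigid resource terms -/

/-- Rigid resource terms (de Bruijn indices for variables):
`a ::= x | λ.a | ⟨a⟩b⃗ | a⊕• | •⊕a` where argument lists are ordered. -/
inductive Rt : Type
  | var : ℕ → Rt
  | lam : Rt → Rt
  | app : Rt → List Rt → Rt
  | inl : Rt → Rt
  | inr : Rt → Rt
deriving Inhabited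

/-- Rigid resource expressions: terms or (rigid) monomials. -/
abbrev REx : Type := Rt ⊕ List Rt

/-! ### Isomorphism of rigid expressions -/

mutual
  /-- Two rigid terms are isomorphic (`≅`) when they differ only by
  permutations of argument lists. -/
  inductive IsoT : Rt → Rt → Prop
    | var (x : ℕ) : IsoT (.var x) (.var x)
    | lam {a a'} : IsoT a a' → IsoT (.lam a) (.lam a')
    | inl {a a'} : IsoT a a' → IsoT (.inl a) (.inl a')
    | inr {a a'} : IsoT a a' → IsoT (.inr a) (.inr a')
    | app {c c' : Rt} {ds ds' : List Rt} :
        IsoT c c' → IsoM ds ds' → IsoT (.app c ds) (.app c' ds')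
  /-- Isomorphism of rigid monomials: a permutation `σ` together with
  isomorphisms `aᵢ ≅ a'_{σ(i)}`. -/
  inductive IsoM : List Rt → List Rt → Prop
    | mk (as as' : List Rt) (h : as'.length = as.length) (σ : Equiv.Perm (Fin as.length))
        (H : ∀ i : Fin as.length, IsoT (as.get i) (as'.get ((σ i).cast h.symm))) :
        IsoM as as'
end

/-! ### Resource expressions as quotients of rigid expressions -/

/-- Resource terms: rigid terms up to permutations of arguments, i.e. terms
whose argument lists are multisets. -/
def ResTerm : Type := Quot IsoT

instance : Inhabited ResTerm := ⟨Quot.mk _ (.var 0)⟩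

/-- The resource term represented by a rigid term (`r ◁ |r|`). -/
def rmk : Rt → ResTerm := Quot.mk IsoT

/-- A choice of rigid representation of a resource term. -/
noncomputable def rout : ResTerm → Rt := Quot.out

/-- The resource monomial (multiset) represented by a rigid monomial (list). -/
def toMul (bs : List Rt) : Multiset ResTerm := ↑(bs.map rmk)

/-- Resource expressions: terms or monomials (finite multisets of terms). -/
abbrev ResExpr : Type := ResTerm ⊕ Multiset ResTerm

/-- The resource expression represented by a rigid expression. -/
def toQ : REx → ResExpr := Sum.map rmk toMul

/-- A choice of rigid representation of a resource expression. -/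
noncomputable def outE : ResExpr → REx :=
  Sum.map rout (fun m => m.toList.map rout)

/-- Variable as a resource term. -/
def qVar (x : ℕ) : ResTerm := rmk (.var x)

/-- Abstraction on resource terms. -/
noncomputable def qLam (s : ResTerm) : ResTerm := rmk (.lam (rout s))

/-- Left injection `(-) ⊕ •` on resource terms. -/
noncomputable def qInl (s : ResTerm) : ResTerm := rmk (.inl (rout s))

/-- Right injection `• ⊕ (-)` on resource terms. -/
noncomputable def qInr (s : ResTerm) : ResTerm := rmk (.inr (rout s))

/-- Application `⟨s⟩t̄` of a resource term to a resource monomial. -/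
noncomputable def qApp (s : ResTerm) (t : Multiset ResTerm) : ResTerm :=
  rmk (.app (rout s) (t.toList.map rout))

/-! ### The nondeterministic λ⊕-calculus (de Bruijn indices) -/

/-- λ⊕-terms: `M ::= x | λx.M | M N | M ⊕ N`. -/
inductive Lam : Type
  | var : ℕ → Lam
  | lam : Lam → Lam
  | app : Lam → Lam → Lam
  | oplus : Lam → Lam → Lam
deriving Inhabited

namespace Lam

/-- Shift free de Bruijn indices `≥ c` up by one. -/
def shift (c : ℕ) : Lam → Lam
  | .var n => .var (if n < c then n else n + 1)
  | .lam M => .lam (M.shift (c + 1))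
  | .app M N => .app (M.shift c) (N.shift c)
  | .oplus M N => .oplus (M.shift c) (N.shift c)

/-- Capture-avoiding substitution `M[N/x]` (de Bruijn). -/
def subst : Lam → ℕ → Lam → Lam
  | .var n, x, N => if n = x then N else if x < n then .var (n - 1) else .var n
  | .lam M, x, N => .lam (M.subst (x + 1) (N.shift 0))
  | .app M P, x, N => .app (M.subst x N) (P.subst x N)
  | .oplus M P, x, N => .oplus (M.subst x N) (P.subst x N)

/-- Does the head of the application spine consist of a variable? -/
def headVar : Lam → Bool
  | .var _ => true
  | .app M _ => M.headVar
  | _ => false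

/-- The hereditary head reduction strategy `L` on λ⊕-terms. -/
def headL : Lam → Lam
  | .var x => .var x
  | .oplus M N => .oplus M.headL N.headL
  | .lam (.oplus P Q) => .oplus (.lam P) (.lam Q)
  | .lam M => .lam M.headL
  | .app (.lam P) N => P.subst 0 N
  | .app (.oplus P Q) N => .oplus (.app P N) (.app Q N)
  | .app M N => if M.headVar then .app M.headL N.headL else .app M.headL N

end Lam

/-! ### The support of Taylor expansion, as a set -/

/-- The support `𝒯(M)` of the Taylor expansion of a λ⊕-term. -/
noncomputable def Tsup : Lam → Set ResTerm
  | .var x => {qVar x}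
  | .lam M => qLam '' Tsup M
  | .app P Q =>
      {u | ∃ s ∈ Tsup P, ∃ t : Multiset ResTerm, (∀ v ∈ t, v ∈ Tsup Q) ∧ u = qApp s t}
  | .oplus P Q => qInl '' Tsup P ∪ qInr '' Tsup Q

/-! ### Term approximants and Böhm trees -/

/-- Term approximants: λ⊕-terms extended with `⊥`. -/
inductive LamB : Type
  | bot : LamB
  | var : ℕ → LamB
  | lam : LamB → LamB
  | app : LamB → LamB → LamB
  | oplus : LamB → LamB → LamB
deriving Inhabited

/-- The approximation order on term approximants: the least partial order
compatible with the syntactic constructs such that `⊥ ≤ M`. -/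
inductive LamB.le : LamB → LamB → Prop
  | bot (M : LamB) : LamB.le .bot M
  | refl (M : LamB) : LamB.le M M
  | trans {M N P} : LamB.le M N → LamB.le N P → LamB.le M P
  | lam {M M'} : LamB.le M M' → LamB.le (.lam M) (.lam M')
  | app {M M' N N'} : LamB.le M M' → LamB.le N N' → LamB.le (.app M N) (.app M' N')
  | oplus {M M' N N'} : LamB.le M M' → LamB.le N N' → LamB.le (.oplus M N) (.oplus M' N')

/-- Is the term of the form `λx⃗.x Q₁…Qₖ`? -/
def Lam.isHNF : Lam → Bool
  | .lam M => M.isHNF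
  | .var _ => true
  | .app M _ => M.headVar
  | .oplus _ _ => false

/-- The elementary Böhm tree of a λ⊕-term: `eBT(M⊕N) = eBT(M)⊕eBT(N)`,
`eBT(λx⃗.x Q₁…Qₖ) = λx⃗.x eBT(Q₁)…eBT(Qₖ)`, and `eBT(M) = ⊥` otherwise. -/
def eBT : Lam → LamB
  | .oplus M N => .oplus (eBT M) (eBT N)
  | .lam M => if M.isHNF then .lam (eBT M) else .bot
  | .var x => .var x
  | .app M N => if M.headVar then .app (eBT M) (eBT N) else .bot

/-- The Böhm tree of a λ⊕-term: the downwards closure of the increasing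
sequence of the elementary Böhm trees of its hereditary head reducts. -/
def BTset (M : Lam) : Set LamB := {B | ∃ n : ℕ, LamB.le B (eBT (Lam.headL^[n] M))}

/-! ### Taylor support of approximants and Böhm trees -/

/-- Taylor support of a term approximant (with `𝒯(⊥) = ∅`). -/
noncomputable def TsupB : LamB → Set ResTerm
  | .bot => ∅
  | .var x => {qVar x}
  | .lam M => qLam '' TsupB M
  | .app P Q =>
      {u | ∃ s ∈ TsupB P, ∃ t : Multiset ResTerm, (∀ v ∈ t, v ∈ TsupB Q) ∧ u = qApp s t}
  | .oplus P Q => qInl '' TsupB P ∪ qInr '' TsupB Q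

/-- Taylor support of a Böhm tree. -/
noncomputable def TsupBT (M : Lam) : Set ResTerm :=
  {s | ∃ B ∈ BTset M, s ∈ TsupB B}

/-! ### Normal resource terms -/

/-- Is the rigid term of the form `a⊕•` or `•⊕a`? -/
def Rt.isSum : Rt → Bool
  | .inl _ => true
  | .inr _ => true
  | _ => false

/-- Can the rigid term be applied without creating a redex
(i.e. is it a variable or an application)? -/
def Rt.isHeadOk : Rt → Bool
  | .var _ => true
  | .app _ _ => true
  | _ => false

/-- A rigid term is normal when it contains no redex, i.e. no subterm of shape
`⟨λx.s⟩t̄`, `⟨s⊕•⟩t̄`, `⟨•⊕s⟩t̄`, `λx.(s⊕•)` or `λx.(•⊕s)`. -/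
def normalRt : Rt → Bool
  | .var _ => true
  | .lam a => !a.isSum && normalRt a
  | .inl a => normalRt a
  | .inr a => normalRt a
  | .app c ds => c.isHeadOk && normalRt c && (ds.attach.all fun e => normalRt e.1)
termination_by r => sizeOf r
decreasing_by
  all_goals simp_wf
  all_goals try omega
  all_goals (have := List.sizeOf_lt_of_mem e.2; omega)

/-- A resource term is normal when (any of) its rigid representations is. -/
def NormalQ (s : ResTerm) : Prop := ∃ a : Rt, rmk a = s ∧ normalRt a = true

/-!
Normality of an element of `𝒯(M)` can be read off locally: `λx.s` is normal iff `s` is normal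
and not a sum, and `⟨s⟩t̄` is normal iff everything in it is normal and `s` is a variable or an
application. For a normal `s ∈ 𝒯(N)` these side conditions are exactly the shape conditions of
`eBT`: `s` is a sum iff `N` is not a head normal form, and `s` is a variable or an application
iff `N` has a variable at its head. So, by induction on `M`, the normal elements of `𝒯(M)` are
those of `𝒯(eBT M)`, the cases where `eBT` returns `⊥` contributing no normal element.
-/

theorem normalRt_app (c : Rt) (ds : List Rt) :
    normalRt (.app c ds) = (c.isHeadOk && normalRt c && ds.all normalRt) := by
  simp only [normalRt, List.all_subtype, List.unattach_attach]

theorem IsoT.isSum_eq {a b : Rt} (h : IsoT a b) : a.isSum = b.isSum := by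
  cases h <;> rfl

theorem IsoT.isHeadOk_eq {a b : Rt} (h : IsoT a b) : a.isHeadOk = b.isHeadOk := by
  cases h <;> rfl

theorem IsoT.normalRt_eq {a b : Rt} (h : IsoT a b) : normalRt a = normalRt b :=
  IsoT.rec (motive_1 := fun a b _ => normalRt a = normalRt b)
    (motive_2 := fun as bs _ => as.all normalRt = bs.all normalRt)
    (fun _ => rfl)
    (fun h ih => by rw [normalRt, normalRt, h.isSum_eq, ih])
    (fun _ ih => by rw [normalRt, normalRt, ih])
    (fun _ ih => by rw [normalRt, normalRt, ih])
    (fun hc _ ihc ihds => by rw [normalRt_app, normalRt_app, hc.isHeadOk_eq, ihc, ihds])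
    (fun _ _ hl σ _ ih => by
      rw [Bool.eq_iff_iff, List.all_eq_true, List.all_eq_true, List.forall_mem_iff_get,
        List.forall_mem_iff_get, ← (σ.trans (finCongr hl.symm)).forall_congr_right]
      simp only [ih]
      rfl)
    h

namespace ResTerm

def isNormal : ResTerm → Bool := Quot.lift normalRt fun _ _ h => h.normalRt_eq

def isSum : ResTerm → Bool := Quot.lift Rt.isSum fun _ _ h => h.isSum_eq

def isHeadOk : ResTerm → Bool := Quot.lift Rt.isHeadOk fun _ _ h => h.isHeadOk_eq

@[simp] theorem isNormal_rmk (a : Rt) : (rmk a).isNormal = normalRt a := rfl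
@[simp] theorem isSum_rmk (a : Rt) : (rmk a).isSum = a.isSum := rfl
@[simp] theorem isHeadOk_rmk (a : Rt) : (rmk a).isHeadOk = a.isHeadOk := rfl

theorem rmk_rout (s : ResTerm) : rmk (rout s) = s := Quot.out_eq s

theorem normalRt_rout (s : ResTerm) : normalRt (rout s) = s.isNormal := by
  rw [← isNormal_rmk, rmk_rout]

theorem isSum_rout (s : ResTerm) : (rout s).isSum = s.isSum := by
  rw [← isSum_rmk, rmk_rout]

theorem isHeadOk_rout (s : ResTerm) : (rout s).isHeadOk = s.isHeadOk := by
  rw [← isHeadOk_rmk, rmk_rout]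

theorem normalQ_iff_isNormal (s : ResTerm) : NormalQ s ↔ s.isNormal = true := by
  constructor
  · rintro ⟨a, rfl, ha⟩
    exact ha
  · intro h
    obtain ⟨a, rfl⟩ := Quot.exists_rep s
    exact ⟨a, rfl, h⟩

@[simp] theorem isSum_qVar (x : ℕ) : (qVar x).isSum = false := rfl
@[simp] theorem isSum_qLam (s : ResTerm) : (qLam s).isSum = false := rfl
@[simp] theorem isSum_qApp (s : ResTerm) (t : Multiset ResTerm) : (qApp s t).isSum = false := rfl
@[simp] theorem isSum_qInl (s : ResTerm) : (qInl s).isSum = true := rfl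
@[simp] theorem isSum_qInr (s : ResTerm) : (qInr s).isSum = true := rfl

@[simp] theorem isHeadOk_qVar (x : ℕ) : (qVar x).isHeadOk = true := rfl
@[simp] theorem isHeadOk_qLam (s : ResTerm) : (qLam s).isHeadOk = false := rfl
@[simp] theorem isHeadOk_qApp (s : ResTerm) (t : Multiset ResTerm) :
    (qApp s t).isHeadOk = true := rfl
@[simp] theorem isHeadOk_qInl (s : ResTerm) : (qInl s).isHeadOk = false := rfl
@[simp] theorem isHeadOk_qInr (s : ResTerm) : (qInr s).isHeadOk = false := rfl

@[simp] theorem isNormal_qVar (x : ℕ) : (qVar x).isNormal = true := by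
  rw [qVar, isNormal_rmk, normalRt]

@[simp] theorem isNormal_qLam (s : ResTerm) : (qLam s).isNormal = (!s.isSum && s.isNormal) := by
  rw [qLam, isNormal_rmk, normalRt, isSum_rout, normalRt_rout]

@[simp] theorem isNormal_qInl (s : ResTerm) : (qInl s).isNormal = s.isNormal := by
  rw [qInl, isNormal_rmk, normalRt, normalRt_rout]

@[simp] theorem isNormal_qInr (s : ResTerm) : (qInr s).isNormal = s.isNormal := by
  rw [qInr, isNormal_rmk, normalRt, normalRt_rout]

theorem isNormal_qApp (s : ResTerm) (t : Multiset ResTerm) :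
    (qApp s t).isNormal = true ↔
      s.isHeadOk = true ∧ s.isNormal = true ∧ ∀ v ∈ t, v.isNormal = true := by
  simp [qApp, normalRt_app, isHeadOk_rout, normalRt_rout, List.all_eq_true, and_assoc]

end ResTerm

open ResTerm

theorem isHeadOk_of_mem_Tsup {P : Lam} (hP : P.headVar = true) {s : ResTerm}
    (hs : s ∈ Tsup P) : s.isHeadOk = true := by
  cases P with
  | var => rw [Tsup, Set.mem_singleton_iff] at hs; rw [hs, isHeadOk_qVar]
  | app => obtain ⟨u, -, t, -, rfl⟩ := hs; exact isHeadOk_qApp u t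
  | lam | oplus => simp [Lam.headVar] at hP

theorem isSum_eq_false_of_mem_Tsup {M : Lam} (hM : M.isHNF = true) {s : ResTerm}
    (hs : s ∈ Tsup M) : s.isSum = false := by
  cases M with
  | var => rw [Tsup, Set.mem_singleton_iff] at hs; rw [hs, isSum_qVar]
  | lam => obtain ⟨u, -, rfl⟩ := hs; exact isSum_qLam u
  | app => obtain ⟨u, -, t, -, rfl⟩ := hs; exact isSum_qApp u t
  | oplus => simp [Lam.isHNF] at hM

theorem headVar_of_mem_Tsup {P : Lam} {s : ResTerm} (hs : s ∈ Tsup P)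
    (hn : s.isNormal = true) (hok : s.isHeadOk = true) : P.headVar = true := by
  induction P generalizing s with
  | var => rfl
  | lam => obtain ⟨u, -, rfl⟩ := hs; simp at hok
  | oplus => rcases hs with ⟨u, -, rfl⟩ | ⟨u, -, rfl⟩ <;> simp at hok
  | app _ _ ih =>
      obtain ⟨u, hu, t, -, rfl⟩ := hs
      obtain ⟨hok, hnu, -⟩ := (isNormal_qApp u t).mp hn
      exact ih hu hnu hok

theorem isHNF_of_mem_Tsup {M : Lam} {s : ResTerm} (hs : s ∈ Tsup M)
    (hn : s.isNormal = true) (hsum : s.isSum = false) : M.isHNF = true := by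
  induction M generalizing s with
  | var => rfl
  | lam _ ih =>
      obtain ⟨u, hu, rfl⟩ := hs
      rw [isNormal_qLam, Bool.and_eq_true, Bool.not_eq_true'] at hn
      exact ih hu hn.2 hn.1
  | oplus => rcases hs with ⟨u, -, rfl⟩ | ⟨u, -, rfl⟩ <;> simp at hsum
  | app =>
      obtain ⟨u, hu, t, -, rfl⟩ := hs
      obtain ⟨hok, hnu, -⟩ := (isNormal_qApp u t).mp hn
      exact headVar_of_mem_Tsup hu hnu hok

theorem isHeadOk_eq_headVar {P : Lam} {s : ResTerm} (hs : s ∈ Tsup P)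
    (hn : s.isNormal = true) : s.isHeadOk = P.headVar := by
  cases hP : P.headVar
  · simpa [hP] using mt (headVar_of_mem_Tsup hs hn)
  · exact isHeadOk_of_mem_Tsup hP hs

theorem isSum_eq_not_isHNF {M : Lam} {s : ResTerm} (hs : s ∈ Tsup M)
    (hn : s.isNormal = true) : s.isSum = !M.isHNF := by
  cases hM : M.isHNF
  · simpa [hM] using mt (isHNF_of_mem_Tsup hs hn)
  · exact isSum_eq_false_of_mem_Tsup hM hs

theorem isNormal_qLam_of_mem_Tsup {M : Lam} {u : ResTerm} (hu : u ∈ Tsup M) :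
    (qLam u).isNormal = (M.isHNF && u.isNormal) := by
  rw [isNormal_qLam]
  cases hn : u.isNormal
  · rw [Bool.and_false, Bool.and_false]
  · rw [isSum_eq_not_isHNF hu hn, Bool.not_not]

theorem isNormal_qApp_of_mem_Tsup {P : Lam} {u : ResTerm} (hu : u ∈ Tsup P)
    (t : Multiset ResTerm) : (qApp u t).isNormal = true ↔
      P.headVar = true ∧ u.isNormal = true ∧ ∀ v ∈ t, v.isNormal = true := by
  rw [isNormal_qApp]
  exact and_congr_left fun ⟨hn, _⟩ => by rw [isHeadOk_eq_headVar hu hn]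

theorem TsupB_eBT_var (x : ℕ) :
    TsupB (eBT (.var x)) = {s ∈ Tsup (.var x) | s.isNormal = true} := by
  ext s
  simp only [eBT, TsupB, Tsup, Set.mem_singleton_iff, Set.mem_ofPred_eq]
  exact ⟨fun h => ⟨h, h ▸ isNormal_qVar x⟩, And.left⟩

theorem TsupB_eBT_lam {M : Lam} (ih : TsupB (eBT M) = {s ∈ Tsup M | s.isNormal = true}) :
    TsupB (eBT (.lam M)) = {s ∈ Tsup (.lam M) | s.isNormal = true} := by
  ext s
  simp only [eBT, Tsup, Set.mem_image]
  split_ifs with h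
  · simp only [TsupB, ih, Set.mem_image, Set.mem_ofPred_eq]
    constructor
    · rintro ⟨u, ⟨hu, hn⟩, rfl⟩
      exact ⟨⟨u, hu, rfl⟩, by rw [isNormal_qLam_of_mem_Tsup hu, h, hn, Bool.and_self]⟩
    · rintro ⟨⟨u, hu, rfl⟩, hn⟩
      rw [isNormal_qLam_of_mem_Tsup hu, h, Bool.true_and] at hn
      exact ⟨u, ⟨hu, hn⟩, rfl⟩
  · simp only [TsupB, Set.mem_empty_iff_false, false_iff]
    rintro ⟨⟨u, hu, rfl⟩, hn⟩
    simp [isNormal_qLam_of_mem_Tsup hu, h] at hn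

theorem TsupB_eBT_app {P Q : Lam} (ihP : TsupB (eBT P) = {s ∈ Tsup P | s.isNormal = true})
    (ihQ : TsupB (eBT Q) = {s ∈ Tsup Q | s.isNormal = true}) :
    TsupB (eBT (.app P Q)) = {s ∈ Tsup (.app P Q) | s.isNormal = true} := by
  ext s
  simp only [eBT, Tsup, Set.mem_ofPred_eq]
  split_ifs with h
  · simp only [TsupB, ihP, ihQ, Set.mem_ofPred_eq]
    constructor
    · rintro ⟨u, ⟨hu, hn⟩, t, ht, rfl⟩
      refine ⟨⟨u, hu, t, fun v hv => (ht v hv).1, rfl⟩, ?_⟩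
      exact (isNormal_qApp_of_mem_Tsup hu t).mpr ⟨h, hn, fun v hv => (ht v hv).2⟩
    · rintro ⟨⟨u, hu, t, ht, rfl⟩, hn⟩
      obtain ⟨-, hnu, hnt⟩ := (isNormal_qApp_of_mem_Tsup hu t).mp hn
      exact ⟨u, ⟨hu, hnu⟩, t, fun v hv => ⟨ht v hv, hnt v hv⟩, rfl⟩
  · simp only [TsupB, Set.mem_empty_iff_false, false_iff, not_and]
    rintro ⟨u, hu, t, -, rfl⟩ hn
    exact h ((isNormal_qApp_of_mem_Tsup hu t).mp hn).1

theorem TsupB_eBT_oplus {P Q : Lam} (ihP : TsupB (eBT P) = {s ∈ Tsup P | s.isNormal = true})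
    (ihQ : TsupB (eBT Q) = {s ∈ Tsup Q | s.isNormal = true}) :
    TsupB (eBT (.oplus P Q)) = {s ∈ Tsup (.oplus P Q) | s.isNormal = true} := by
  ext s
  simp only [eBT, TsupB, Tsup, ihP, ihQ, Set.mem_sep_iff, Set.mem_union, Set.mem_image]
  constructor
  · rintro (⟨u, ⟨hu, hn⟩, rfl⟩ | ⟨u, ⟨hu, hn⟩, rfl⟩)
    · exact ⟨Or.inl ⟨u, hu, rfl⟩, by rwa [isNormal_qInl]⟩
    · exact ⟨Or.inr ⟨u, hu, rfl⟩, by rwa [isNormal_qInr]⟩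
  · rintro ⟨⟨u, hu, rfl⟩ | ⟨u, hu, rfl⟩, hn⟩
    · exact Or.inl ⟨u, ⟨hu, by rwa [isNormal_qInl] at hn⟩, rfl⟩
    · exact Or.inr ⟨u, ⟨hu, by rwa [isNormal_qInr] at hn⟩, rfl⟩

theorem taysup_eBT_eq_normal_taysup (M : Lam) :
    TsupB (eBT M) = {s ∈ Tsup M | NormalQ s} := by
  simp only [normalQ_iff_isNormal]
  induction M with
  | var x => exact TsupB_eBT_var x
  | lam M ih => exact TsupB_eBT_lam ih
  | app P Q ihP ihQ => exact TsupB_eBT_app ihP ihQ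
  | oplus P Q ihP ihQ => exact TsupB_eBT_oplus ihP ihQ
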